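/- The work of evaluating a well-typed Linear A expression is independent of its inputs: for any well-typed Linear A expression e, any two well-typed valuations x_i, x_i′ of its free non-linear variables, and any two well-typed valuations ẋ_j, ẋ_j′ of its free linear variables, the total work of evaluating e[x_i; ẋ_j] equals the total work of evaluating e[x_i′; ẋ_j′]. -/

import Mathlib

/-!
A deep embedding of Linear A / Linear B from
"You Only Linearize Once: Tangents Transpose to Gradients".

* n-ary tuple types are modeled as nested binary pairs;
* variables and function names are natural numbers;
* the linear type system `HasTy` demands every non-linear variable be used
  at least once and every linear variable exactly once (up to `dup`/`drop`);
* `Eval P ρ dρ e os ls w` is call-by-value big-step evaluation over exact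
  real arithmetic, returning the non-linear results `os`, the linear results
  `ls`, and the work `w` under the paper's cost model;
* `Transp` is the transposition transformation 𝒯 (Fig. 3),
  `Unzip` is the unzipping transformation 𝒰 (Fig. 4), and
  `Jvp` is forward-mode differentiation 𝒥 (Fig. 5).
-/

namespace LinearA

abbrev Var := ℕ

/-- Types of Linear A: real scalars and (binary, nestable) tuples. -/
inductive Ty : Type
  | real : Ty
  | pair : Ty → Ty → Ty
deriving DecidableEq

/-- The number of real scalars in a type. -/
def Ty.scalars : Ty → ℕ
  | .real => 1
  | .pair a b => a.scalars + b.scalars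

inductive Prim1 : Type | sin | cos | exp
deriving DecidableEq

inductive Prim2 : Type | add | mul
deriving DecidableEq

/-- Expressions of Linear A.  Binders carry their types.  In `ret`, `lete`,
`app` the first list is the non-linear one and the second the linear one. -/
inductive Expr : Type
  | ret (vs : List Var) (dvs : List Var)                                -- multi-value return (vs; dvs)
  | lete (bs : List (Var × Ty)) (dbs : List (Var × Ty)) (e₁ e₂ : Expr)  -- multi-value let
  | unpack (b₁ b₂ : Var × Ty) (v : Var) (e : Expr)                      -- non-linear tuple unpacking let
  | linUnpack (b₁ b₂ : Var × Ty) (dv : Var) (e : Expr)                  -- linear tuple unpacking let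
  | app (f : ℕ) (vs : List Var) (dvs : List Var)                        -- function application
  | var (v : Var)                                                       -- non-linear variable
  | lit (r : ℝ)                                                         -- real literal
  | tup (v₁ v₂ : Var)                                                   -- non-linear tuple constructor
  | prim1 (op : Prim1) (v : Var)                                        -- unary non-linear primitive
  | prim2 (op : Prim2) (v₁ v₂ : Var)                                    -- binary non-linear primitive
  | linVar (dv : Var)                                                   -- linear variable
  | linZero (τ : Ty)                                                    -- linear zero
  | linTup (dv₁ dv₂ : Var)                                              -- linear tuple constructor
  | linAdd (dv₁ dv₂ : Var)                                              -- linear addition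
  | scale (v : Var) (dv : Var)                                          -- right-linear multiplication v * dv
  | dup (dv : Var)                                                      -- explicit linear fan-out
  | drop (e : Expr)                                                     -- explicit drop

/-- A (top-level, non-recursive) function definition. -/
structure FDef : Type where
  params : List (Var × Ty)        -- non-linear formal parameters
  linParams : List (Var × Ty)     -- linear formal parameters
  retTys : List Ty                -- non-linear result types
  linRetTys : List Ty             -- linear result types
  body : Expr

/-- A program is a list of function definitions; names are list indices. -/
abbrev Program := List FDef

/-- Size of an expression: one unit per grammar node, counting variable
references. -/
def Expr.size : Expr → ℕ
  | .ret vs dvs => 1 + vs.length + dvs.length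
  | .lete bs dbs e₁ e₂ => 1 + bs.length + dbs.length + e₁.size + e₂.size
  | .unpack _ _ _ e => 4 + e.size
  | .linUnpack _ _ _ e => 4 + e.size
  | .app _ vs dvs => 1 + vs.length + dvs.length
  | .var _ => 1
  | .lit _ => 1
  | .tup _ _ => 3
  | .prim1 _ _ => 2
  | .prim2 _ _ _ => 3
  | .linVar _ => 1
  | .linZero _ => 1
  | .linTup _ _ => 3
  | .linAdd _ _ => 3
  | .scale _ _ => 3
  | .dup _ => 2
  | .drop e => 1 + e.size

def FDef.size (d : FDef) : ℕ :=
  1 + d.params.length + d.linParams.length + d.retTys.length + d.linRetTys.length + d.body.size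

/-- Size of a program. -/
def progSize (P : Program) : ℕ := (P.map FDef.size).sum

/-- Typing environments: finite sets of typed variables. -/
abbrev TEnv := Finset (Var × Ty)

/-- The linear type system of Linear A (Fig. 2):
`HasTy P Γ Δ e τs σs` means that in non-linear environment `Γ` and linear
environment `Δ`, the expression `e` returns non-linear results typed `τs`
and linear results typed `σs`.  Every non-linear variable must be used at
least once (unions of the `Γᵢ` need not be disjoint but leaves consume
exactly their own environment) and every linear variable exactly once
(unions of the `Δᵢ` are disjoint). -/
inductive HasTy : Program → TEnv → TEnv → Expr → List Ty → List Ty → Prop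
  | ret {P : Program} (vs dvs : List (Var × Ty)) :
      (vs.map Prod.fst).Nodup → (dvs.map Prod.fst).Nodup →
      HasTy P vs.toFinset dvs.toFinset
        (.ret (vs.map Prod.fst) (dvs.map Prod.fst)) (vs.map Prod.snd) (dvs.map Prod.snd)
  | lete {P : Program} {Γ₁ Γ₂ Δ₁ Δ₂ : TEnv} {bs dbs : List (Var × Ty)}
      {e₁ e₂ : Expr} {τs σs : List Ty} :
      HasTy P Γ₁ Δ₁ e₁ (bs.map Prod.snd) (dbs.map Prod.snd) →
      HasTy P (Γ₂ ∪ bs.toFinset) (Δ₂ ∪ dbs.toFinset) e₂ τs σs →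
      Disjoint Δ₁ Δ₂ → Disjoint Δ₂ dbs.toFinset →
      (dbs.map Prod.fst).Nodup →
      HasTy P (Γ₁ ∪ Γ₂) (Δ₁ ∪ Δ₂) (.lete bs dbs e₁ e₂) τs σs
  | unpack {P : Program} {Γ Δ : TEnv} {e : Expr} {τs σs : List Ty}
      (v : Var) (b₁ b₂ : Var × Ty) :
      HasTy P (Γ ∪ {b₁, b₂}) Δ e τs σs →
      HasTy P (Γ ∪ {(v, .pair b₁.2 b₂.2)}) Δ (.unpack b₁ b₂ v e) τs σs
  | linUnpack {P : Program} {Γ Δ : TEnv} {e : Expr} {τs σs : List Ty}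
      (dv : Var) (b₁ b₂ : Var × Ty) :
      HasTy P Γ (Δ ∪ {b₁, b₂}) e τs σs →
      Disjoint Δ ({b₁, b₂} : TEnv) → b₁.1 ≠ b₂.1 →
      HasTy P Γ (Δ ∪ {(dv, .pair b₁.2 b₂.2)}) (.linUnpack b₁ b₂ dv e) τs σs
  | app {P : Program} (f : ℕ) (d : FDef) (vs dvs : List Var) :
      P[f]? = some d →
      vs.length = d.params.length → dvs.length = d.linParams.length →
      dvs.Nodup →
      HasTy P (vs.zip (d.params.map Prod.snd)).toFinset
              (dvs.zip (d.linParams.map Prod.snd)).toFinset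
              (.app f vs dvs) d.retTys d.linRetTys
  | var {P : Program} (v : Var) (τ : Ty) : HasTy P {(v, τ)} ∅ (.var v) [τ] []
  | lit {P : Program} (r : ℝ) : HasTy P ∅ ∅ (.lit r) [.real] []
  | tup {P : Program} (v₁ v₂ : Var) (τ₁ τ₂ : Ty) :
      HasTy P {(v₁, τ₁), (v₂, τ₂)} ∅ (.tup v₁ v₂) [.pair τ₁ τ₂] []
  | prim1 {P : Program} (op : Prim1) (v : Var) :
      HasTy P {(v, .real)} ∅ (.prim1 op v) [.real] []
  | prim2 {P : Program} (op : Prim2) (v₁ v₂ : Var) :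
      HasTy P {(v₁, .real), (v₂, .real)} ∅ (.prim2 op v₁ v₂) [.real] []
  | linVar {P : Program} (dv : Var) (τ : Ty) : HasTy P ∅ {(dv, τ)} (.linVar dv) [] [τ]
  | linZero {P : Program} (τ : Ty) : HasTy P ∅ ∅ (.linZero τ) [] [τ]
  | linTup {P : Program} (dv₁ dv₂ : Var) (τ₁ τ₂ : Ty) :
      dv₁ ≠ dv₂ →
      HasTy P ∅ {(dv₁, τ₁), (dv₂, τ₂)} (.linTup dv₁ dv₂) [] [.pair τ₁ τ₂]
  | linAdd {P : Program} (dv₁ dv₂ : Var) (τ : Ty) :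
      dv₁ ≠ dv₂ →
      HasTy P ∅ {(dv₁, τ), (dv₂, τ)} (.linAdd dv₁ dv₂) [] [τ]
  | scale {P : Program} (v dv : Var) (τ : Ty) :
      HasTy P {(v, .real)} {(dv, τ)} (.scale v dv) [] [τ]
  | dup {P : Program} (dv : Var) (τ : Ty) :
      HasTy P ∅ {(dv, τ)} (.dup dv) [] [τ, τ]
  | drop {P : Program} {Γ Δ : TEnv} {e : Expr} {τs σs : List Ty} :
      HasTy P Γ Δ e τs σs → HasTy P Γ Δ (.drop e) [] []

/-- A program is well typed when the body of each definition is well typed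
using only earlier definitions (so there is no recursion). -/
def ProgramWT (P : Program) : Prop :=
  ∀ (i : ℕ) (d : FDef), P[i]? = some d →
    HasTy (P.take i) d.params.toFinset d.linParams.toFinset d.body d.retTys d.linRetTys

/-! ### Values and evaluation -/

inductive Val : Type
  | real (r : ℝ)
  | pair (a b : Val)

def Val.scalars : Val → ℕ
  | .real _ => 1
  | .pair a b => a.scalars + b.scalars

/-- The zero value of a type. -/
def zeroVal : Ty → Val
  | .real => .real 0
  | .pair a b => .pair (zeroVal a) (zeroVal b)

/-- Pointwise addition of values (of a common type). -/
def addVal : Val → Val → Val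
  | .real a, .real b => .real (a + b)
  | .pair a₁ a₂, .pair b₁ b₂ => .pair (addVal a₁ b₁) (addVal a₂ b₂)
  | v, _ => v

/-- Pointwise scaling of a value by a real scalar. -/
def smulVal (c : ℝ) : Val → Val
  | .real r => .real (c * r)
  | .pair a b => .pair (smulVal c a) (smulVal c b)

/-- Dot product of two values (of a common type), over all constituent
real scalars. -/
def dotVal : Val → Val → ℝ
  | .real a, .real b => a * b
  | .pair a₁ a₂, .pair b₁ b₂ => dotVal a₁ b₁ + dotVal a₂ b₂
  | _, _ => 0

/-- Flattening a value to its list of real scalars. -/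
def Val.flat : Val → List ℝ
  | .real r => [r]
  | .pair a b => a.flat ++ b.flat

/-- The list of real scalars of a list of values. -/
def flatList (vs : List Val) : List ℝ := (vs.map Val.flat).flatten

inductive ValHasTy : Val → Ty → Prop
  | real (r : ℝ) : ValHasTy (.real r) .real
  | pair {a b : Val} {τ₁ τ₂ : Ty} :
      ValHasTy a τ₁ → ValHasTy b τ₂ → ValHasTy (.pair a b) (.pair τ₁ τ₂)

/-- Value environments (valuations). -/
abbrev VEnv := Var → Val

/-- A valuation is well typed for an environment when it assigns each
variable a value of its declared type. -/
def EnvTyped (ρ : VEnv) (Γ : TEnv) : Prop := ∀ p ∈ Γ, ValHasTy (ρ p.1) p.2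

/-- Bind a list of variables to a list of values. -/
def updEnv (ρ : VEnv) (xs : List Var) (vs : List Val) : VEnv :=
  (xs.zip vs).foldl (fun ρ p => Function.update ρ p.1 p.2) ρ

noncomputable def evalPrim1 : Prim1 → ℝ → ℝ
  | .sin => Real.sin
  | .cos => Real.cos
  | .exp => Real.exp

def evalPrim2 : Prim2 → ℝ → ℝ → ℝ
  | .add => (· + ·)
  | .mul => (· * ·)

/-- Call-by-value big-step evaluation with cost:
`Eval P ρ dρ e os ls w` means that under the non-linear valuation `ρ` and
linear valuation `dρ`, `e` evaluates to non-linear results `os` and linear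
results `ls`, performing total work `w` (the paper's cost model: non-linear
primitives cost 1; linear addition and scaling cost 1 per real scalar in the
result; `drop` additionally costs 1 per real scalar dropped; everything else
is free). -/
inductive Eval : Program → VEnv → VEnv → Expr → List Val → List Val → ℕ → Prop
  | ret {P ρ dρ} (vs dvs : List Var) :
      Eval P ρ dρ (.ret vs dvs) (vs.map ρ) (dvs.map dρ) 0
  | lete {P ρ dρ bs dbs e₁ e₂ us dus os ls w₁ w₂} :
      Eval P ρ dρ e₁ us dus w₁ →
      Eval P (updEnv ρ (bs.map Prod.fst) us) (updEnv dρ (dbs.map Prod.fst) dus) e₂ os ls w₂ →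
      Eval P ρ dρ (.lete bs dbs e₁ e₂) os ls (w₁ + w₂)
  | unpack {P ρ dρ b₁ b₂ v e a b os ls w} :
      ρ v = .pair a b →
      Eval P (updEnv ρ [b₁.1, b₂.1] [a, b]) dρ e os ls w →
      Eval P ρ dρ (.unpack b₁ b₂ v e) os ls w
  | linUnpack {P ρ dρ b₁ b₂ dv e a b os ls w} :
      dρ dv = .pair a b →
      Eval P ρ (updEnv dρ [b₁.1, b₂.1] [a, b]) e os ls w →
      Eval P ρ dρ (.linUnpack b₁ b₂ dv e) os ls w
  | app {P ρ dρ f d vs dvs os ls w} :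
      P[f]? = some d →
      Eval P (updEnv (fun _ => Val.real 0) (d.params.map Prod.fst) (vs.map ρ))
             (updEnv (fun _ => Val.real 0) (d.linParams.map Prod.fst) (dvs.map dρ))
             d.body os ls w →
      Eval P ρ dρ (.app f vs dvs) os ls w
  | var {P ρ dρ} (v : Var) : Eval P ρ dρ (.var v) [ρ v] [] 0
  | lit {P ρ dρ} (r : ℝ) : Eval P ρ dρ (.lit r) [.real r] [] 0
  | tup {P ρ dρ} (v₁ v₂ : Var) : Eval P ρ dρ (.tup v₁ v₂) [.pair (ρ v₁) (ρ v₂)] [] 0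
  | prim1 {P ρ dρ op v r} :
      ρ v = .real r →
      Eval P ρ dρ (.prim1 op v) [.real (evalPrim1 op r)] [] 1
  | prim2 {P ρ dρ op v₁ v₂ r₁ r₂} :
      ρ v₁ = .real r₁ → ρ v₂ = .real r₂ →
      Eval P ρ dρ (.prim2 op v₁ v₂) [.real (evalPrim2 op r₁ r₂)] [] 1
  | linVar {P ρ dρ} (dv : Var) : Eval P ρ dρ (.linVar dv) [] [dρ dv] 0
  | linZero {P ρ dρ} (τ : Ty) : Eval P ρ dρ (.linZero τ) [] [zeroVal τ] 0
  | linTup {P ρ dρ} (d₁ d₂ : Var) :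
      Eval P ρ dρ (.linTup d₁ d₂) [] [.pair (dρ d₁) (dρ d₂)] 0
  | linAdd {P ρ dρ} (d₁ d₂ : Var) :
      Eval P ρ dρ (.linAdd d₁ d₂) [] [addVal (dρ d₁) (dρ d₂)]
        (addVal (dρ d₁) (dρ d₂)).scalars
  | scale {P ρ dρ dv c} (v : Var) :
      ρ v = .real c →
      Eval P ρ dρ (.scale v dv) [] [smulVal c (dρ dv)] (smulVal c (dρ dv)).scalars
  | dup {P ρ dρ} (dv : Var) : Eval P ρ dρ (.dup dv) [] [dρ dv, dρ dv] 0
  | drop {P ρ dρ e os ls w} :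
      Eval P ρ dρ e os ls w →
      Eval P ρ dρ (.drop e) [] []
        (w + (os.map Val.scalars).sum + (ls.map Val.scalars).sum)

/-! ### The purely non-linear fragment and Linear B -/

/-- The purely non-linear fragment of Linear A: expressions that mention no
linear variables and return no linear results. -/
inductive PureNonLin : Expr → Prop
  | ret (vs : List Var) : PureNonLin (.ret vs [])
  | lete {e₁ e₂ : Expr} (bs : List (Var × Ty)) :
      PureNonLin e₁ → PureNonLin e₂ → PureNonLin (.lete bs [] e₁ e₂)
  | unpack {e : Expr} (b₁ b₂ : Var × Ty) (v : Var) :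
      PureNonLin e → PureNonLin (.unpack b₁ b₂ v e)
  | app (f : ℕ) (vs : List Var) : PureNonLin (.app f vs [])
  | var (v : Var) : PureNonLin (.var v)
  | lit (r : ℝ) : PureNonLin (.lit r)
  | tup (v₁ v₂ : Var) : PureNonLin (.tup v₁ v₂)
  | prim1 (op : Prim1) (v : Var) : PureNonLin (.prim1 op v)
  | prim2 (op : Prim2) (v₁ v₂ : Var) : PureNonLin (.prim2 op v₁ v₂)
  | drop {e : Expr} : PureNonLin e → PureNonLin (.drop e)

/-- Linear expressions of Linear B: they return only linear results, and any
non-linear sub-expression is purely non-linear (in particular reads no linear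
variables, not even to drop them). -/
inductive LinBExpr : Expr → Prop
  | ret (dvs : List Var) : LinBExpr (.ret [] dvs)
  | letLin {le₁ le₂ : Expr} (dbs : List (Var × Ty)) :
      LinBExpr le₁ → LinBExpr le₂ → LinBExpr (.lete [] dbs le₁ le₂)
  | letNonLin {e₁ le₂ : Expr} (bs : List (Var × Ty)) :
      PureNonLin e₁ → LinBExpr le₂ → LinBExpr (.lete bs [] e₁ le₂)
  | unpack {le : Expr} (b₁ b₂ : Var × Ty) (v : Var) :
      LinBExpr le → LinBExpr (.unpack b₁ b₂ v le)
  | linUnpack {le : Expr} (b₁ b₂ : Var × Ty) (dv : Var) :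
      LinBExpr le → LinBExpr (.linUnpack b₁ b₂ dv le)
  | app (f : ℕ) (vs dvs : List Var) : LinBExpr (.app f vs dvs)
  | linVar (dv : Var) : LinBExpr (.linVar dv)
  | linZero (τ : Ty) : LinBExpr (.linZero τ)
  | linTup (d₁ d₂ : Var) : LinBExpr (.linTup d₁ d₂)
  | linAdd (d₁ d₂ : Var) : LinBExpr (.linAdd d₁ d₂)
  | scale (v dv : Var) : LinBExpr (.scale v dv)
  | dup (dv : Var) : LinBExpr (.dup dv)
  | drop {le : Expr} : LinBExpr le → LinBExpr (.drop le)

/-- A purely non-linear function definition. -/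
def FDefNonLin (d : FDef) : Prop :=
  d.linParams = [] ∧ d.linRetTys = [] ∧ PureNonLin d.body

/-- A linear function definition of Linear B. -/
def FDefLin (d : FDef) : Prop := d.retTys = [] ∧ LinBExpr d.body

/-- A Linear B program: every definition returns either only linear or only
non-linear results. -/
def LinearBProg (P : Program) : Prop := ∀ d ∈ P, FDefNonLin d ∨ FDefLin d

/-! ### Transposition (Fig. 3) -/

/-- The expression emitting a zero cotangent for each variable of `Δ`
(used to transpose `drop`). -/
def zerosFor (Δ : List (Var × Ty)) : Expr :=
  Δ.foldr (fun b acc => .lete [] [b] (.linZero b.2) acc) (.ret [] (Δ.map Prod.fst))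

/-- Transposition of the linear expressions of Linear B:
`Transp Δ Δc le te` means that with ordered linear environment `Δ` (listing
`le`'s free linear variables, in the order of `te`'s results) and ordered
cotangent environment `Δc` (naming one fresh cotangent variable per linear
result of `le`, with the same types), `le` transposes to `te`.  Non-linear
sub-expressions are left untouched; the `perm` rule implements the implicit
shuffles that re-order an environment together with the corresponding
results. -/
inductive Transp : List (Var × Ty) → List (Var × Ty) → Expr → Expr → Prop
  | ret (dvs ddvs : List (Var × Ty)) :
      dvs.map Prod.snd = ddvs.map Prod.snd →
      (dvs.map Prod.fst).Nodup → (ddvs.map Prod.fst).Nodup →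
      Transp dvs ddvs (.ret [] (dvs.map Prod.fst)) (.ret [] (ddvs.map Prod.fst))
  | letLin {le₁ le₂ te₁ te₂ : Expr} (Δ₁ Δ₂ Δc dbs ddbs ddws rs : List (Var × Ty)) :
      Transp (dbs ++ Δ₂) Δc le₂ te₂ →
      Transp Δ₁ ddbs le₁ te₁ →
      ddbs.map Prod.snd = dbs.map Prod.snd →
      ddws.map Prod.snd = Δ₂.map Prod.snd →
      rs.map Prod.snd = Δ₁.map Prod.snd →
      ((ddbs ++ ddws ++ rs).map Prod.fst).Nodup →
      Transp (Δ₁ ++ Δ₂) Δc (.lete [] dbs le₁ le₂)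
        (.lete [] (ddbs ++ ddws) te₂
          (.lete [] rs te₁ (.ret [] (rs.map Prod.fst ++ ddws.map Prod.fst))))
  | letNonLin {e₁ le₂ te₂ : Expr} (Δ Δc bs : List (Var × Ty)) :
      PureNonLin e₁ → bs ≠ [] →
      Transp Δ Δc le₂ te₂ →
      Transp Δ Δc (.lete bs [] e₁ le₂) (.lete bs [] e₁ te₂)
  | unpack {le te : Expr} (Δ Δc : List (Var × Ty)) (b₁ b₂ : Var × Ty) (v : Var) :
      Transp Δ Δc le te →
      Transp Δ Δc (.unpack b₁ b₂ v le) (.unpack b₁ b₂ v te)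
  | linUnpack {le te : Expr} (Δ₂ Δc ws : List (Var × Ty)) (b₁ b₂ : Var × Ty)
      (dv c₁ c₂ ddv : Var) :
      Transp (b₁ :: b₂ :: Δ₂) Δc le te →
      ws.map Prod.snd = Δ₂.map Prod.snd →
      (((c₁, b₁.2) :: (c₂, b₂.2) :: ws).map Prod.fst).Nodup →
      Transp ((dv, .pair b₁.2 b₂.2) :: Δ₂) Δc (.linUnpack b₁ b₂ dv le)
        (.lete [] ((c₁, b₁.2) :: (c₂, b₂.2) :: ws) te
          (.lete [] [(ddv, .pair b₁.2 b₂.2)] (.linTup c₁ c₂)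
            (.ret [] (ddv :: ws.map Prod.fst))))
  | app (f : ℕ) (vs : List Var) (Δ Δc : List (Var × Ty)) :
      Transp Δ Δc (.app f vs (Δ.map Prod.fst)) (.app f vs (Δc.map Prod.fst))
  | nonlin {e : Expr} : PureNonLin e → Transp [] [] e e
  | linVar (dv ddv : Var) (τ : Ty) :
      Transp [(dv, τ)] [(ddv, τ)] (.linVar dv) (.linVar ddv)
  | linZero (ddv : Var) (τ : Ty) :
      Transp [] [(ddv, τ)] (.linZero τ) (.drop (.linVar ddv))
  | linTup (d₁ d₂ ddv c₁ c₂ : Var) (τ₁ τ₂ : Ty) :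
      c₁ ≠ c₂ →
      Transp [(d₁, τ₁), (d₂, τ₂)] [(ddv, .pair τ₁ τ₂)] (.linTup d₁ d₂)
        (.linUnpack (c₁, τ₁) (c₂, τ₂) ddv (.ret [] [c₁, c₂]))
  | linAdd (d₁ d₂ ddv : Var) (τ : Ty) :
      Transp [(d₁, τ), (d₂, τ)] [(ddv, τ)] (.linAdd d₁ d₂) (.dup ddv)
  | scale (v dv ddv : Var) (τ : Ty) :
      Transp [(dv, τ)] [(ddv, τ)] (.scale v dv) (.scale v ddv)
  | dup (dv dd₁ dd₂ : Var) (τ : Ty) :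
      Transp [(dv, τ)] [(dd₁, τ), (dd₂, τ)] (.dup dv) (.linAdd dd₁ dd₂)
  | dropLin {le : Expr} (Δ : List (Var × Ty)) :
      LinBExpr le →
      Transp Δ [] (.drop le) (zerosFor Δ)
  | perm {le te : Expr} (Δ Δ' Δc rs rs' : List (Var × Ty)) :
      Transp Δ Δc le te →
      rs.map Prod.snd = Δ.map Prod.snd →
      (rs.zip Δ).Perm (rs'.zip Δ') →
      (rs.map Prod.fst).Nodup →
      Transp Δ' Δc le (.lete [] rs te (.ret [] (rs'.map Prod.fst)))

/-- Transposition of a linear function definition: the transposed function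
takes the same non-linear parameters, takes cotangents of the original linear
results, and returns cotangents of the original linear parameters. -/
def TranspDef (d d' : FDef) : Prop :=
  d.retTys = [] ∧
  ∃ ddvs : List (Var × Ty),
    ddvs.map Prod.snd = d.linRetTys ∧ (ddvs.map Prod.fst).Nodup ∧
    Transp d.linParams ddvs d.body d'.body ∧
    d'.params = d.params ∧ d'.linParams = ddvs ∧
    d'.retTys = [] ∧ d'.linRetTys = d.linParams.map Prod.snd

/-- Transposition of a Linear B program: each linear definition is
transposed (in place, so call sites keep their function indices) and each
non-linear definition is kept as is. -/
def TranspProg (P P' : Program) : Prop :=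
  List.Forall₂ (fun d d' => TranspDef d d' ∨ (FDefNonLin d ∧ d' = d)) P P'

/-! ### Unzipping (Fig. 4) -/

/-- A frame of a context `E` of non-linear bindings. -/
inductive Frame : Type
  | bindF (bs : List (Var × Ty)) (e : Expr)     -- let (bs;) = e in ⟨hole⟩
  | unpackF (b₁ b₂ : Var × Ty) (v : Var)        -- let ⊗(b₁,b₂) = v in ⟨hole⟩

/-- A context is a list of non-linear binding frames with a single hole at
the end. -/
abbrev Ctx := List Frame

/-- Plugging an expression into the hole of a context. -/
def plug : Ctx → Expr → Expr
  | [], e => e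
  | .bindF bs e₁ :: E, e => .lete bs [] e₁ (plug E e)
  | .unpackF b₁ b₂ v :: E, e => .unpack b₁ b₂ v (plug E e)

/-- The (typed) variables bound by a context. -/
def ctxBinds : Ctx → TEnv
  | [] => ∅
  | .bindF bs _ :: E => bs.toFinset ∪ ctxBinds E
  | .unpackF b₁ b₂ _ :: E => {b₁, b₂} ∪ ctxBinds E

/-- Frame sizes, so that unzipping is size-preserving at the program level. -/
def Frame.size : Frame → ℕ
  | .bindF bs e => 1 + bs.length + e.size
  | .unpackF _ _ _ => 4

/-- The free non-linear variables of an expression. -/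
def Expr.freeNLVars : Expr → Finset Var
  | .ret vs _ => vs.toFinset
  | .lete bs _ e₁ e₂ => e₁.freeNLVars ∪ (e₂.freeNLVars \ (bs.map Prod.fst).toFinset)
  | .unpack b₁ b₂ v e => {v} ∪ (e.freeNLVars \ {b₁.1, b₂.1})
  | .linUnpack _ _ _ e => e.freeNLVars
  | .app _ vs _ => vs.toFinset
  | .var v => {v}
  | .lit _ => ∅
  | .tup v₁ v₂ => {v₁, v₂}
  | .prim1 _ v => {v}
  | .prim2 _ v₁ v₂ => {v₁, v₂}
  | .linVar _ => ∅
  | .linZero _ => ∅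
  | .linTup _ _ => ∅
  | .linAdd _ _ => ∅
  | .scale v _ => {v}
  | .dup _ => ∅
  | .drop e => e.freeNLVars

/-- Non-linear leaves, handled by rule `ULeaf`. -/
def isNLLeaf : Expr → Prop
  | .var _ => True
  | .lit _ => True
  | .tup _ _ => True
  | .prim1 _ _ => True
  | .prim2 _ _ _ => True
  | _ => False

/-- Linear leaves, handled by rule `ULinLeaf`. -/
def isLinLeaf : Expr → Prop
  | .linVar _ => True
  | .linZero _ => True
  | .linTup _ _ => True
  | .linAdd _ _ => True
  | .scale _ _ => True
  | .dup _ => True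
  | _ => False

/-- Unzipping `𝒰` of Linear A expressions into Linear B (Fig. 4):
`Unzip sig e E e' le'` splits `e` into a context `E` of shared non-linear
bindings, a non-linear result expression `e'` and a linear residual
expression `le'`.  In the unzipped program the definition with index `f`
becomes the pair of definitions with indices `2f` (non-linear part, which
additionally returns the tape) and `2f+1` (linear part, which consumes the
tape); `sig f = some (τks, τms)` records the original non-linear result
types `τks` of `f` and the types `τms` of its tape. -/
inductive Unzip (sig : ℕ → Option (List Ty × List Ty)) :
    Expr → Ctx → Expr → Expr → Prop
  | ret (vs dvs : List Var) :
      Unzip sig (.ret vs dvs) [] (.ret vs []) (.ret [] dvs)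
  | lete {e₁ e₂ e₁' e₂' le₁' le₂' : Expr} {E₁ E₂ : Ctx}
      (bs dbs : List (Var × Ty)) :
      Unzip sig e₁ E₁ e₁' le₁' →
      Unzip sig e₂ E₂ e₂' le₂' →
      Unzip sig (.lete bs dbs e₁ e₂) (E₁ ++ .bindF bs e₁' :: E₂) e₂'
        (.lete [] dbs le₁' le₂')
  | unpack {e e' le' : Expr} {E : Ctx} (b₁ b₂ : Var × Ty) (v : Var) :
      Unzip sig e E e' le' →
      Unzip sig (.unpack b₁ b₂ v e) (.unpackF b₁ b₂ v :: E) e' le'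
  | linUnpack {e e' le' : Expr} {E : Ctx} (b₁ b₂ : Var × Ty) (dv : Var) :
      Unzip sig e E e' le' →
      Unzip sig (.linUnpack b₁ b₂ dv e) E e' (.linUnpack b₁ b₂ dv le')
  | app (f : ℕ) (vs dvs : List Var) (τks τms : List Ty) (ws xs : List (Var × Ty)) :
      sig f = some (τks, τms) →
      ws.map Prod.snd = τks → xs.map Prod.snd = τms →
      ((ws ++ xs).map Prod.fst).Nodup →
      Unzip sig (.app f vs dvs)
        [.bindF (ws ++ xs) (.app (2 * f) vs [])]
        (.ret (ws.map Prod.fst) [])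
        (.app (2 * f + 1) (xs.map Prod.fst) dvs)
  | nlLeaf {e : Expr} : isNLLeaf e → Unzip sig e [] e (.ret [] [])
  | linLeaf {le : Expr} : isLinLeaf le → Unzip sig le [] (.ret [] []) le
  | drop {e e' le' : Expr} {E : Ctx} :
      Unzip sig e E e' le' →
      Unzip sig (.drop e) E (.drop e') (.drop le')

/-- `IsTape Γ E le' xs`: the tape `xs` consists exactly of the non-linear
variables read by the residual `le'`, each bound (with its type) by `Γ` or by
the context `E`. -/
def IsTape (Γ : TEnv) (E : Ctx) (le' : Expr) (xs : List (Var × Ty)) : Prop :=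
  (xs.map Prod.fst).Nodup ∧
  (xs.map Prod.fst).toFinset = le'.freeNLVars ∧
  ∀ b ∈ xs, b ∈ Γ ∪ ctxBinds E

/-- The non-linear partial `E(e', xs)`: plug `let (ws;) = e' in (ws, xs;)`
into the hole of `E`, so that it returns the non-linear results of the
original expression together with the tape. -/
def nlPartial (E : Ctx) (e' : Expr) (ws xs : List (Var × Ty)) : Expr :=
  plug E (.lete ws [] e' (.ret (ws.map Prod.fst ++ xs.map Prod.fst) []))

/-- The reconstruction `E(e', xs; le')`:
`let (ws, xs;) = E(e', xs) in let (; dws) = le' in (ws; dws)`. -/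
def recon (E : Ctx) (e' le' : Expr) (ws xs dws : List (Var × Ty)) : Expr :=
  .lete (ws ++ xs) [] (nlPartial E e' ws xs)
    (.lete [] dws le' (.ret (ws.map Prod.fst) (dws.map Prod.fst)))

/-- Unzipping a function definition into its non-linear part `dN` (which
additionally returns the tape) and its linear part `dL` (which consumes the
tape). -/
def UnzipDef (sig : ℕ → Option (List Ty × List Ty)) (d dN dL : FDef) : Prop :=
  ∃ (E : Ctx) (e' le' : Expr) (xs ws : List (Var × Ty)),
    Unzip sig d.body E e' le' ∧
    IsTape d.params.toFinset E le' xs ∧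
    ws.map Prod.snd = d.retTys ∧ (ws.map Prod.fst).Nodup ∧
    dN = ⟨d.params, [], d.retTys ++ xs.map Prod.snd, [], nlPartial E e' ws xs⟩ ∧
    dL = ⟨xs, d.linParams, [], d.linRetTys, le'⟩

/-- Unzipping a program: definition `f` becomes the pair `2f` (non-linear
part) and `2f+1` (linear part), and `sig` records the signatures. -/
def UnzipProg (sig : ℕ → Option (List Ty × List Ty)) (P P' : Program) : Prop :=
  P'.length = 2 * P.length ∧
  ∀ (f : ℕ) (d : FDef), P[f]? = some d →
    ∃ dN dL : FDef, P'[2 * f]? = some dN ∧ P'[2 * f + 1]? = some dL ∧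
      UnzipDef sig d dN dL ∧
      sig f = some (d.retTys, dL.params.map Prod.snd)

/-! ### Forward-mode differentiation (Fig. 5) -/

/-- Forward-mode automatic differentiation `𝒥` (Fig. 5):
`Jvp m e e'` means that under the primal-to-tangent renaming `m` (an
association list pairing each occurrence of a free primal variable with the
linear variable carrying its tangent), the purely non-linear expression `e`
differentiates to `e'`, which returns the primal results together with their
tangents.  The rule `dupVar` inserts the explicit `dup`s for primal
variables whose tangent is used more than once, and `perm` permutes the
association list. -/
inductive Jvp : List (Var × Var) → Expr → Expr → Prop
  | ret (vs dvs : List Var) :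
      vs.length = dvs.length →
      Jvp (vs.zip dvs) (.ret vs []) (.ret vs dvs)
  | lete {e₁ e₂ e₁' e₂' : Expr} (m₁ m₂ : List (Var × Var)) (bs dbs : List (Var × Ty)) :
      Jvp m₁ e₁ e₁' →
      Jvp ((bs.map Prod.fst).zip (dbs.map Prod.fst) ++ m₂) e₂ e₂' →
      dbs.map Prod.snd = bs.map Prod.snd →
      Jvp (m₁ ++ m₂) (.lete bs [] e₁ e₂) (.lete bs dbs e₁' e₂')
  | unpack {e e' : Expr} (b₁ b₂ : Var × Ty) (v dv c₁ c₂ : Var) (m : List (Var × Var)) :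
      Jvp ((b₁.1, c₁) :: (b₂.1, c₂) :: m) e e' →
      Jvp ((v, dv) :: m) (.unpack b₁ b₂ v e)
        (.unpack b₁ b₂ v (.linUnpack (c₁, b₁.2) (c₂, b₂.2) dv e'))
  | app (f : ℕ) (vs dvs : List Var) :
      vs.length = dvs.length →
      Jvp (vs.zip dvs) (.app f vs []) (.app f vs dvs)
  | var (v dv : Var) : Jvp [(v, dv)] (.var v) (.ret [v] [dv])
  | lit (r : ℝ) (p z : Var) :
      Jvp [] (.lit r)
        (.lete [(p, .real)] [] (.lit r)
          (.lete [] [(z, .real)] (.linZero .real) (.ret [p] [z])))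
  | tup (v₁ v₂ d₁ d₂ p q : Var) (τ₁ τ₂ : Ty) :
      Jvp [(v₁, d₁), (v₂, d₂)] (.tup v₁ v₂)
        (.lete [(p, .pair τ₁ τ₂)] [] (.tup v₁ v₂)
          (.lete [] [(q, .pair τ₁ τ₂)] (.linTup d₁ d₂) (.ret [p] [q])))
  | primSin (v dv p c t : Var) :
      Jvp [(v, dv)] (.prim1 .sin v)
        (.lete [(p, .real)] [] (.prim1 .sin v)
          (.lete [(c, .real)] [] (.prim1 .cos v)
            (.lete [] [(t, .real)] (.scale c dv) (.ret [p] [t]))))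
  | primCos (v dv p s n ns t : Var) :
      Jvp [(v, dv)] (.prim1 .cos v)
        (.lete [(p, .real)] [] (.prim1 .cos v)
          (.lete [(s, .real)] [] (.prim1 .sin v)
            (.lete [(n, .real)] [] (.lit (-1))
              (.lete [(ns, .real)] [] (.prim2 .mul n s)
                (.lete [] [(t, .real)] (.scale ns dv) (.ret [p] [t]))))))
  | primExp (v dv p t : Var) :
      Jvp [(v, dv)] (.prim1 .exp v)
        (.lete [(p, .real)] [] (.prim1 .exp v)
          (.lete [] [(t, .real)] (.scale p dv) (.ret [p] [t])))
  | primAdd (v₁ v₂ d₁ d₂ p t : Var) :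
      Jvp [(v₁, d₁), (v₂, d₂)] (.prim2 .add v₁ v₂)
        (.lete [(p, .real)] [] (.prim2 .add v₁ v₂)
          (.lete [] [(t, .real)] (.linAdd d₁ d₂) (.ret [p] [t])))
  | primMul (v₁ v₂ d₁ d₂ p a b t : Var) :
      Jvp [(v₁, d₁), (v₂, d₂)] (.prim2 .mul v₁ v₂)
        (.lete [(p, .real)] [] (.prim2 .mul v₁ v₂)
          (.lete [] [(a, .real)] (.scale v₁ d₂)
            (.lete [] [(b, .real)] (.scale v₂ d₁)
              (.lete [] [(t, .real)] (.linAdd a b) (.ret [p] [t])))))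
  | drop {e e' : Expr} (m : List (Var × Var)) :
      Jvp m e e' → Jvp m (.drop e) (.drop e')
  | dupVar {e e' : Expr} (m : List (Var × Var)) (x dx u w : Var) (τ : Ty) :
      Jvp ((x, u) :: (x, w) :: m) e e' →
      Jvp ((x, dx) :: m) e (.lete [] [(u, τ), (w, τ)] (.dup dx) e')
  | perm {e e' : Expr} (m m' : List (Var × Var)) :
      m.Perm m' → Jvp m e e' → Jvp m' e e'

/-- Forward-mode differentiation of a (purely non-linear) function
definition: the differentiated function takes tangents for all its
parameters and returns primal results paired with their tangents. -/
def JDef (d d' : FDef) : Prop :=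
  d.linParams = [] ∧ d.linRetTys = [] ∧
  ∃ dxs : List (Var × Ty),
    dxs.map Prod.snd = d.params.map Prod.snd ∧ (dxs.map Prod.fst).Nodup ∧
    Jvp ((d.params.map Prod.fst).zip (dxs.map Prod.fst)) d.body d'.body ∧
    d'.params = d.params ∧ d'.linParams = dxs ∧
    d'.retTys = d.retTys ∧ d'.linRetTys = d.retTys

/-- Forward-mode differentiation of a program, definition by definition. -/
def JProg (P P' : Program) : Prop := List.Forall₂ JDef P P'

/-- The vector of `Fin n → ℝ` determined by a list of reals. -/
def vecOf (l : List ℝ) (n : ℕ) : Fin n → ℝ := fun i => l.getD i 0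

/-!
Evaluation looks at values only through their shapes, i.e. their types: the
cost of a linear addition, of a scaling and of a `drop` is the number of
scalars of a value of a given shape, and every other construct adds a
fixed cost. Hence, by induction on one evaluation, two evaluations of a
well-typed expression in environments that agree in shape on its free
variables return results of equal shapes and perform equal work. The
invariant relates the two environments to each other rather than to the
typing context, because a `let` may rebind a variable of the context at
another type.
-/

def Val.ty : Val → Ty
  | .real _ => .real
  | .pair a b => .pair a.ty b.ty

theorem ValHasTy.ty_eq {v : Val} {τ : Ty} (h : ValHasTy v τ) : v.ty = τ := by
  induction h with
  | real => rfl
  | pair _ _ ih₁ ih₂ => rw [Val.ty, ih₁, ih₂]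

theorem Val.scalars_ty (v : Val) : v.ty.scalars = v.scalars := by
  induction v with
  | real => rfl
  | pair a b iha ihb => rw [Val.ty, Ty.scalars, iha, ihb, Val.scalars]

theorem sum_scalars_eq_of_map_ty_eq {vs vs' : List Val}
    (h : vs.map Val.ty = vs'.map Val.ty) :
    (vs.map Val.scalars).sum = (vs'.map Val.scalars).sum := by
  have hs : Val.scalars = Ty.scalars ∘ Val.ty := funext fun v => (Val.scalars_ty v).symm
  rw [hs, ← List.map_map, h, List.map_map]

def addTy : Ty → Ty → Ty
  | .real, .real => .real
  | .pair a b, .pair c d => .pair (addTy a c) (addTy b d)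
  | τ, _ => τ

theorem addVal_ty (a b : Val) : (addVal a b).ty = addTy a.ty b.ty := by
  induction a generalizing b with
  | real => cases b <;> rfl
  | pair a₁ a₂ ih₁ ih₂ =>
    cases b with
    | real => rfl
    | pair b₁ b₂ => simp only [addVal, Val.ty, addTy, ih₁, ih₂]

theorem smulVal_ty (c : ℝ) (v : Val) : (smulVal c v).ty = v.ty := by
  induction v with
  | real => rfl
  | pair a b iha ihb => rw [smulVal, Val.ty, iha, ihb, Val.ty]

theorem HasTy.mono {P P' : Program}
    (hPP' : ∀ (f : ℕ) (d : FDef), P[f]? = some d → P'[f]? = some d)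
    {Γ Δ : TEnv} {e : Expr} {τs σs : List Ty} (h : HasTy P Γ Δ e τs σs) :
    HasTy P' Γ Δ e τs σs := by
  induction h with
  | app f d vs dvs hf h₁ h₂ h₃ => exact .app f d vs dvs (hPP' f d hf) h₁ h₂ h₃
  | lete _ _ h₁ h₂ h₃ ih₁ ih₂ => exact .lete ih₁ ih₂ h₁ h₂ h₃
  | _ => constructor <;> assumption

theorem ProgramWT.hasTy_body {P : Program} (hP : ProgramWT P) {f : ℕ} {d : FDef}
    (hf : P[f]? = some d) :
    HasTy P d.params.toFinset d.linParams.toFinset d.body d.retTys d.linRetTys :=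
  (hP f d hf).mono fun g d' hg => by
    rw [List.getElem?_take] at hg
    split_ifs at hg
    exact hg

theorem Eval.length_eq {P : Program} (hP : ProgramWT P) {ρ dρ : VEnv} {e : Expr}
    {os ls : List Val} {w : ℕ} (h : Eval P ρ dρ e os ls w)
    {Γ Δ : TEnv} {τs σs : List Ty} (ht : HasTy P Γ Δ e τs σs) :
    os.length = τs.length ∧ ls.length = σs.length := by
  induction h generalizing Γ Δ τs σs with
  | lete _ _ _ ih => cases ht with | lete _ ht => exact ih ht
  | unpack _ _ ih => cases ht with | unpack _ _ _ ht => exact ih ht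
  | linUnpack _ _ ih => cases ht with | linUnpack _ _ _ ht => exact ih ht
  | app hf _ ih =>
    cases ht with
    | app _ _ _ _ hf' =>
      cases hf.symm.trans hf'
      exact ih (hP.hasTy_body hf)
  | _ => cases ht; simp

section ShapeAgreement

variable {ρ ρ' : VEnv}

theorem image_fst_toFinset (bs : List (Var × Ty)) :
    Prod.fst '' (bs.toFinset : Set (Var × Ty)) = {v | v ∈ bs.map Prod.fst} := by
  ext v
  simp

theorem map_ty_eq_of_eqOn {xs : List Var}
    (h : Set.EqOn (Val.ty ∘ ρ) (Val.ty ∘ ρ') {v | v ∈ xs}) :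
    (xs.map ρ).map Val.ty = (xs.map ρ').map Val.ty := by
  simpa only [List.map_map] using List.map_congr_left fun v hv => h hv

theorem eqOn_update {s : Set Var} (h : Set.EqOn (Val.ty ∘ ρ) (Val.ty ∘ ρ') s) (x : Var)
    {u u' : Val} (hu : u.ty = u'.ty) :
    Set.EqOn (Val.ty ∘ Function.update ρ x u) (Val.ty ∘ Function.update ρ' x u')
      (insert x s) := by
  rw [Function.comp_update, Function.comp_update]
  intro v hv
  by_cases hvx : v = x
  · subst hvx
    simp [hu]
  · simpa [Function.update_of_ne hvx] using h (hv.resolve_left hvx)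

theorem eqOn_updEnv {s : Set Var} {xs : List Var} {us us' : List Val}
    (h : Set.EqOn (Val.ty ∘ ρ) (Val.ty ∘ ρ') s) (hus : us.map Val.ty = us'.map Val.ty)
    (hlen : xs.length ≤ us.length) :
    Set.EqOn (Val.ty ∘ updEnv ρ xs us) (Val.ty ∘ updEnv ρ' xs us') (s ∪ {v | v ∈ xs}) := by
  induction xs generalizing ρ ρ' s us us' with
  | nil => simpa [updEnv] using h
  | cons x xs ih =>
    obtain ⟨u, us, rfl⟩ := List.exists_cons_of_length_pos (lt_of_lt_of_le (Nat.succ_pos _) hlen)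
    cases us' with
    | nil => simp at hus
    | cons u' us' =>
      simp only [List.map_cons, List.cons.injEq] at hus
      rw [show s ∪ {v | v ∈ x :: xs} = insert x s ∪ {v | v ∈ xs} by ext; simp; tauto]
      exact ih (eqOn_update h x hus.1) hus.2 (Nat.le_of_succ_le_succ hlen)

theorem eqOn_updEnv_union {Γ : TEnv} {bs : List (Var × Ty)} {us us' : List Val}
    (h : Set.EqOn (Val.ty ∘ ρ) (Val.ty ∘ ρ') (Prod.fst '' (Γ : Set (Var × Ty))))
    (hus : us.map Val.ty = us'.map Val.ty) (hlen : bs.length ≤ us.length) :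
    Set.EqOn (Val.ty ∘ updEnv ρ (bs.map Prod.fst) us) (Val.ty ∘ updEnv ρ' (bs.map Prod.fst) us')
      (Prod.fst '' ((Γ ∪ bs.toFinset : TEnv) : Set (Var × Ty))) := by
  rw [Finset.coe_union, Set.image_union, image_fst_toFinset]
  exact eqOn_updEnv h hus (by simpa using hlen)

theorem eqOn_unpack {Γ : TEnv} {v : Var} {b₁ b₂ : Var × Ty} {a b a' b' : Val}
    (h : Set.EqOn (Val.ty ∘ ρ) (Val.ty ∘ ρ')
      (Prod.fst '' ((Γ ∪ {(v, .pair b₁.2 b₂.2)} : TEnv) : Set (Var × Ty))))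
    (hv : ρ v = .pair a b) (hv' : ρ' v = .pair a' b') :
    Set.EqOn (Val.ty ∘ updEnv ρ [b₁.1, b₂.1] [a, b]) (Val.ty ∘ updEnv ρ' [b₁.1, b₂.1] [a', b'])
      (Prod.fst '' ((Γ ∪ {b₁, b₂} : TEnv) : Set (Var × Ty))) := by
  have hab := h (Set.mem_image_of_mem Prod.fst (by simp : (v, b₁.2.pair b₂.2) ∈ _))
  simp only [Function.comp_apply, hv, hv', Val.ty, Ty.pair.injEq] at hab
  refine (eqOn_updEnv_union (Γ := Γ) (bs := [b₁, b₂]) ?_ (by simp [hab]) (by simp)).mono ?_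
  · exact h.mono (Set.image_mono (by simp))
  · simp

theorem eqOn_updEnv_args {vs : List Var} {bs : List (Var × Ty)}
    (h : Set.EqOn (Val.ty ∘ ρ) (Val.ty ∘ ρ')
      (Prod.fst '' ((vs.zip (bs.map Prod.snd)).toFinset : Set (Var × Ty))))
    (hlen : vs.length = bs.length) (σ : VEnv) :
    Set.EqOn (Val.ty ∘ updEnv σ (bs.map Prod.fst) (vs.map ρ))
      (Val.ty ∘ updEnv σ (bs.map Prod.fst) (vs.map ρ'))
      (Prod.fst '' (bs.toFinset : Set (Var × Ty))) := by
  rw [image_fst_toFinset, List.map_fst_zip (by simp [hlen])] at h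
  simpa using eqOn_updEnv_union (Γ := ∅) (fun _ _ => rfl) (map_ty_eq_of_eqOn h) (by simp [hlen])

theorem EnvTyped.eqOn_ty {Γ : TEnv} (hρ : EnvTyped ρ Γ) (hρ' : EnvTyped ρ' Γ) :
    Set.EqOn (Val.ty ∘ ρ) (Val.ty ∘ ρ') (Prod.fst '' (Γ : Set (Var × Ty))) := by
  rintro _ ⟨p, hp, rfl⟩
  exact (hρ p hp).ty_eq.trans (hρ' p hp).ty_eq.symm

end ShapeAgreement

theorem Eval.map_ty_eq_and_work_eq {P : Program} (hP : ProgramWT P) {ρ dρ : VEnv} {e : Expr}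
    {os ls : List Val} {w : ℕ} (h : Eval P ρ dρ e os ls w)
    {Γ Δ : TEnv} {τs σs : List Ty} (ht : HasTy P Γ Δ e τs σs)
    {ρ' dρ' : VEnv} {os' ls' : List Val} {w' : ℕ} (h' : Eval P ρ' dρ' e os' ls' w')
    (hρ : Set.EqOn (Val.ty ∘ ρ) (Val.ty ∘ ρ') (Prod.fst '' (Γ : Set (Var × Ty))))
    (hdρ : Set.EqOn (Val.ty ∘ dρ) (Val.ty ∘ dρ') (Prod.fst '' (Δ : Set (Var × Ty)))) :
    os.map Val.ty = os'.map Val.ty ∧ ls.map Val.ty = ls'.map Val.ty ∧ w = w' := by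
  induction h generalizing Γ Δ τs σs ρ' dρ' os' ls' w' with
  | ret vs dvs =>
    cases ht with
    | ret bs dbs =>
      cases h'
      rw [image_fst_toFinset] at hρ hdρ
      exact ⟨map_ty_eq_of_eqOn hρ, map_ty_eq_of_eqOn hdρ, rfl⟩
  | lete h₁ _ ih₁ ih₂ =>
    cases ht with
    | lete ht₁ ht₂ =>
      cases h' with
      | lete h₁' h₂' =>
        obtain ⟨hus, hdus, hw₁⟩ :=
          ih₁ ht₁ h₁' (hρ.mono (Set.image_mono (by simp))) (hdρ.mono (Set.image_mono (by simp)))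
        obtain ⟨hlen, hdlen⟩ := h₁.length_eq hP ht₁
        obtain ⟨hos, hls, hw₂⟩ := ih₂ ht₂ h₂'
          (eqOn_updEnv_union (hρ.mono (Set.image_mono (by simp))) hus (by simp [hlen]))
          (eqOn_updEnv_union (hdρ.mono (Set.image_mono (by simp))) hdus (by simp [hdlen]))
        exact ⟨hos, hls, by rw [hw₁, hw₂]⟩
  | unpack hv _ ih =>
    cases ht with
    | unpack _ _ _ ht =>
      cases h' with
      | unpack hv' h' => exact ih ht h' (eqOn_unpack hρ hv hv') hdρ
  | linUnpack hv _ ih =>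
    cases ht with
    | linUnpack _ _ _ ht =>
      cases h' with
      | linUnpack hv' h' => exact ih ht h' hρ (eqOn_unpack hdρ hv hv')
  | app hf _ ih =>
    cases ht with
    | app _ _ _ _ hf' hlen hdlen =>
      cases hf.symm.trans hf'
      cases h' with
      | app hf'' h' =>
        cases hf.symm.trans hf''
        exact ih (hP.hasTy_body hf) h' (eqOn_updEnv_args hρ hlen _) (eqOn_updEnv_args hdρ hdlen _)
  | drop _ ih =>
    cases ht with
    | drop ht =>
      cases h' with
      | drop h' =>
        obtain ⟨hos, hls, hw⟩ := ih ht h' hρ hdρ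
        rw [hw, sum_scalars_eq_of_map_ty_eq hos, sum_scalars_eq_of_map_ty_eq hls]
        exact ⟨rfl, rfl, rfl⟩
  | _ =>
    cases ht; cases h'; simp_all [Set.EqOn, Val.ty, addVal_ty, smulVal_ty, ← Val.scalars_ty]

/-- **Work is independent of inputs** (Theorem 2.2, Claim 1).  For a
well-typed Linear A expression `e` and any two well-typed valuations of its
free non-linear and linear variables, the total work of evaluating `e` is
the same. -/
theorem work_independent_of_inputs
    {P : Program} {Γ Δ : TEnv} {e : Expr} {τs σs : List Ty}
    (hP : ProgramWT P) (ht : HasTy P Γ Δ e τs σs)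
    {ρ ρ' dρ dρ' : VEnv} {os os' ls ls' : List Val} {w w' : ℕ}
    (hρ : EnvTyped ρ Γ) (hdρ : EnvTyped dρ Δ)
    (hρ' : EnvTyped ρ' Γ) (hdρ' : EnvTyped dρ' Δ)
    (h₁ : Eval P ρ dρ e os ls w) (h₂ : Eval P ρ' dρ' e os' ls' w') :
    w = w' :=
  (h₁.map_ty_eq_and_work_eq hP ht h₂ (hρ.eqOn_ty hρ') (hdρ.eqOn_ty hdρ')).2.2

end LinearA
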